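/- Suppose the digraph of W is strongly connected and structurally unbalanced (no gauge for the full node set exists). Then for every closed-loop trajectory (x, ς, s) of the prescribed-time sliding mode protocol with data (ρ1, ρ2, T_r, T_s, μ1, μ2, μ3, δ, d), one has x t k = 0 for all nodes k and all t ≥ T_r + T_s (prescribed-time stability within the preassigned time T_r + T_s despite the disturbances). -/

import Mathlib

open Matrix

/-- Time-varying gain: `μ_T(t) = κ/(T − t)` for `0 ≤ t < T`, `0` otherwise. -/
noncomputable def gain (κ T t : ℝ) : ℝ := if 0 ≤ t ∧ t < T then κ / (T - t) else 0

/-- Signed Laplacian `L = D − W` with `D k k = ∑_l |W k l|`. -/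
noncomputable def sLap {N : ℕ} (W : Matrix (Fin N) (Fin N) ℝ) : Matrix (Fin N) (Fin N) ℝ :=
  Matrix.diagonal (fun k => ∑ l, |W k l|) - W

/-- Node `i` reaches node `j`: reflexive–transitive closure of the edge relation
`E i j ↔ W j i ≠ 0`. -/
def Reaches {N : ℕ} (W : Matrix (Fin N) (Fin N) ℝ) : Fin N → Fin N → Prop :=
  Relation.ReflTransGen (fun i j => W j i ≠ 0)

def StronglyConnected {N : ℕ} (W : Matrix (Fin N) (Fin N) ℝ) : Prop :=
  ∀ i j, Reaches W i j

def QuasiStronglyConnected {N : ℕ} (W : Matrix (Fin N) (Fin N) ℝ) : Prop :=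
  ∃ r, ∀ j, Reaches W r j

def WeaklyConnected {N : ℕ} (W : Matrix (Fin N) (Fin N) ℝ) : Prop :=
  ∀ i j, Relation.ReflTransGen (fun a b => W b a ≠ 0 ∨ W a b ≠ 0) i j

/-- `k` is a leader: every node reaching `k` is reached back by `k`. -/
def IsLeader {N : ℕ} (W : Matrix (Fin N) (Fin N) ℝ) (k : Fin N) : Prop :=
  ∀ j, Reaches W j k → Reaches W k j

/-- Closed strong component of a leader `k`. -/
def CSC {N : ℕ} (W : Matrix (Fin N) (Fin N) ℝ) (k : Fin N) : Set (Fin N) :=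
  {j | Reaches W j k ∧ Reaches W k j}

/-- A gauge for a node set `S`. -/
def IsGauge {N : ℕ} (W : Matrix (Fin N) (Fin N) ℝ) (S : Set (Fin N)) (g : Fin N → ℝ) : Prop :=
  (∀ k ∈ S, g k = 1 ∨ g k = -1) ∧ ∀ k ∈ S, ∀ l ∈ S, g k * W k l * g l = |W k l|

/-- Nominal prescribed-time trajectory of the protocol (4). -/
def NominalTraj {N : ℕ} (W : Matrix (Fin N) (Fin N) ℝ) (κ ρ1 ρ2 T1 : ℝ)
    (X : ℝ → Fin N → ℝ) : Prop :=
  Continuous X ∧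
  ∀ t : ℝ, 0 ≤ t → t ≠ T1 →
    HasDerivAt X ((-(ρ1 + ρ2 * gain κ T1 t)) • (sLap W).mulVec (X t)) t

/-- Closed-loop trajectory of the prescribed-time sliding mode protocol (47)-(48):
`x` states, `ς` auxiliary variable (σ = x + ς), `s` a Filippov selection of sign(σ),
`d` the disturbances. -/
def SMCTraj {N : ℕ} (W : Matrix (Fin N) (Fin N) ℝ) (κ ρ1 ρ2 Tr Ts μ1 μ2 μ3 : ℝ)
    (d x ς s : ℝ → Fin N → ℝ) : Prop :=
  Continuous x ∧ Continuous ς ∧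
  (∀ t k, |s t k| ≤ 1 ∧ s t k * (x t k + ς t k) = |x t k + ς t k|) ∧
  ∀ t : ℝ, 0 ≤ t → t ≠ Tr → t ≠ Tr + Ts →
    (HasDerivAt ς ((ρ1 + ρ2 * gain κ (Tr + Ts) t) • (sLap W).mulVec (x t)) t ∧
     ∀ k, HasDerivAt (fun τ => x τ k)
       (-(ρ1 + ρ2 * gain κ (Tr + Ts) t) * ((sLap W).mulVec (x t)) k
         - μ1 * s t k - (μ2 + μ3 * gain κ Tr t) * (x t k + ς t k) + d t k) t)

/-!
The sliding variable `σ = x + ς` obeys `σ' = -μ1 s - (μ2 + μ3 μ_{Tr}) σ + d`, and since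
`|d| ≤ δ < μ1` this gives `(σ_k²)' ≤ -2 μ3 μ_{Tr}(t) σ_k²`. A nonnegative `f` with
`f' ≤ -(P / (b - t)) f` on `(a, b)` vanishes at `b` (and stays zero while `f' ≤ 0`), so `σ ≡ 0`
from `Tr` on, where the dynamics reduce to `x' = -(ρ1 + ρ2 μ_T) L x`. Strong connectivity yields
a positive left null vector `p` of the Laplacian of `|W|`, for which
`2 ∑ p_k x_k (L x)_k = ∑_{k,l} p_k (|W_kl| (x_k² + x_l²) - 2 W_kl x_k x_l)`
is a sum of nonnegative terms, vanishing only when `x / |x_k|` is a gauge. Structural unbalance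
thus makes this form positive definite, and `V = ∑ p_k x_k²` satisfies the same prescribed-time
inequality on `(Tr, T)`.
-/

open Set Filter Topology Finset

theorem antitoneOn_Ici_of_hasDerivAt_nonpos_of_ne {f f' : ℝ → ℝ} {b e : ℝ}
    (hcont : ContinuousOn f (Ici b))
    (hf : ∀ t, b < t → t ≠ e → HasDerivAt f (f' t) t)
    (hf' : ∀ t, b < t → t ≠ e → f' t ≤ 0) : AntitoneOn f (Ici b) := by
  have piece : ∀ {D : Set ℝ}, Convex ℝ D → D ⊆ Ici b → (∀ t ∈ interior D, b < t ∧ t ≠ e) →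
      AntitoneOn f D := fun hD hsub hint =>
    antitoneOn_of_hasDerivWithinAt_nonpos hD (hcont.mono hsub)
      (fun t ht => (hf t (hint t ht).1 (hint t ht).2).hasDerivWithinAt)
      (fun t ht => hf' t (hint t ht).1 (hint t ht).2)
  rcases le_or_gt e b with heb | hbe
  · exact piece (convex_Ici b) subset_rfl fun t ht => by
      rw [interior_Ici] at ht; exact ⟨ht, (heb.trans_lt ht).ne'⟩
  · rw [← Icc_union_Ici_eq_Ici hbe.le]
    refine AntitoneOn.union_right ?_ ?_ (isGreatest_Icc hbe.le) isLeast_Ici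
    · exact piece (convex_Icc b e) Icc_subset_Ici_self fun t ht => by
        rw [interior_Icc] at ht; exact ⟨ht.1, ht.2.ne⟩
    · exact piece (convex_Ici e) (Ici_subset_Ici.2 hbe.le) fun t ht => by
        rw [interior_Ici] at ht; exact ⟨hbe.trans ht, ht.ne'⟩

theorem eq_zero_of_hasDerivAt_le_neg_div_mul {f f' : ℝ → ℝ} {a b P : ℝ} (hab : a < b)
    (hP : 0 < P) (hf0 : ∀ t ∈ Icc a b, 0 ≤ f t) (hcont : ContinuousOn f (Icc a b))
    (hf : ∀ t ∈ Ioo a b, HasDerivAt f (f' t) t)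
    (hf' : ∀ t ∈ Ioo a b, f' t ≤ -(P / (b - t)) * f t) : f b = 0 := by
  -- `(b - t) ^ (-P)` is an integrating factor
  have hweight : ∀ t < b,
      HasDerivAt (fun u => (b - u) ^ (-P)) (P * (b - t) ^ (-P) / (b - t)) t := fun t ht => by
    have h := ((Real.hasDerivAt_rpow_const (p := -P) (Or.inl (sub_pos.2 ht).ne')).comp t
      ((hasDerivAt_id t).const_sub b))
    refine h.congr_deriv ?_
    rw [Real.rpow_sub_one (sub_pos.2 ht).ne']
    ring
  have hanti : AntitoneOn (fun t => f t * (b - t) ^ (-P)) (Ico a b) := by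
    refine antitoneOn_of_hasDerivWithinAt_nonpos (convex_Ico a b) ?_ ?_ ?_
      (f' := fun t => f' t * (b - t) ^ (-P) + f t * (P * (b - t) ^ (-P) / (b - t)))
    · exact (hcont.mono Ico_subset_Icc_self).mul fun t ht =>
        (hweight t ht.2).continuousAt.continuousWithinAt
    · rw [interior_Ico]
      exact fun t ht => ((hf t ht).mul (hweight t ht.2)).hasDerivWithinAt
    · rw [interior_Ico]
      intro t ht
      have hw : 0 < (b - t) ^ (-P) := Real.rpow_pos_of_pos (sub_pos.2 ht.2) _
      calc f' t * (b - t) ^ (-P) + f t * (P * (b - t) ^ (-P) / (b - t))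
          ≤ -(P / (b - t)) * f t * (b - t) ^ (-P) + f t * (P * (b - t) ^ (-P) / (b - t)) := by
            gcongr; exact hf' t ht
        _ = 0 := by ring
  have hbound : ∀ t ∈ Ico a b, f t ≤ f a * (b - a) ^ (-P) * (b - t) ^ P := fun t ht => by
    have hbt : 0 < b - t := sub_pos.2 ht.2
    calc f t = f t * (b - t) ^ (-P) * (b - t) ^ P := by
          rw [mul_assoc, ← Real.rpow_add hbt, neg_add_cancel, Real.rpow_zero, mul_one]
      _ ≤ f a * (b - a) ^ (-P) * (b - t) ^ P :=
          mul_le_mul_of_nonneg_right (hanti (left_mem_Ico.2 hab) ht ht.1) (by positivity)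
  have hlim : Tendsto (fun t => f a * (b - a) ^ (-P) * (b - t) ^ P) (𝓝[Ico a b] b) (𝓝 0) := by
    have hc : ContinuousAt (fun t => f a * (b - a) ^ (-P) * (b - t) ^ P) b :=
      continuousAt_const.mul <| (Real.continuousAt_rpow_const _ _ (Or.inr hP.le)).comp
        (continuousAt_const.sub continuousAt_id)
    simpa [Real.zero_rpow hP.ne'] using hc.continuousWithinAt.tendsto
  have : (𝓝[Ico a b] b).NeBot := by
    rw [nhdsWithin_Ico_eq_nhdsLT hab]; infer_instance
  have hfb : Tendsto f (𝓝[Ico a b] b) (𝓝 (f b)) :=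
    (hcont b (right_mem_Icc.2 hab.le)).mono Ico_subset_Icc_self
  exact le_antisymm (le_of_tendsto_of_tendsto hfb hlim (eventually_nhdsWithin_of_forall hbound))
    (hf0 b (right_mem_Icc.2 hab.le))

theorem gain_nonneg {κ : ℝ} (hκ : 0 ≤ κ) (T t : ℝ) : 0 ≤ gain κ T t := by
  unfold gain
  split_ifs with h
  · exact div_nonneg hκ (sub_pos.2 h.2).le
  · exact le_rfl

theorem gain_of_lt {κ T t : ℝ} (ht : 0 ≤ t) (htT : t < T) : gain κ T t = κ / (T - t) :=
  if_pos ⟨ht, htT⟩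

theorem gain_of_le {κ T t : ℝ} (hTt : T ≤ t) : gain κ T t = 0 :=
  if_neg fun h => (h.2.trans_le hTt).false

theorem eq_zero_of_hasDerivAt_le_neg_gain_mul {f f' : ℝ → ℝ} {κ c a b e : ℝ} (hκ : 0 < κ)
    (hc : 0 < c) (ha : 0 ≤ a) (hab : a < b) (hbe : b ≤ e) (hf0 : ∀ t, 0 ≤ f t)
    (hcont : Continuous f) (hf : ∀ t, a < t → t ≠ b → t ≠ e → HasDerivAt f (f' t) t)
    (hf' : ∀ t, a < t → t ≠ b → t ≠ e → f' t ≤ -(c * gain κ b t) * f t) :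
    ∀ t, b ≤ t → f t = 0 := by
  have hfb : f b = 0 := by
    refine eq_zero_of_hasDerivAt_le_neg_div_mul hab (mul_pos hc hκ) (fun t _ => hf0 t)
      hcont.continuousOn (fun t ht => hf t ht.1 ht.2.ne (ht.2.trans_le hbe).ne) fun t ht => ?_
    have h := hf' t ht.1 ht.2.ne (ht.2.trans_le hbe).ne
    rwa [gain_of_lt (ha.trans ht.1.le) ht.2, ← mul_div_assoc] at h
  have hanti : AntitoneOn f (Ici b) := by
    refine antitoneOn_Ici_of_hasDerivAt_nonpos_of_ne hcont.continuousOn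
      (fun t ht hte => hf t (hab.trans ht) ht.ne' hte) fun t ht hte => ?_
    simpa [gain_of_le ht.le] using hf' t (hab.trans ht) ht.ne' hte
  exact fun t ht => le_antisymm (hfb ▸ hanti self_mem_Ici ht ht) (hf0 t)

theorem hasDerivAt_sum_mul_sq {ι : Type*} [Fintype ι] (p : ι → ℝ) {x : ℝ → ι → ℝ}
    {v : ι → ℝ} {t : ℝ} (hx : ∀ k, HasDerivAt (fun τ => x τ k) (v k) t) :
    HasDerivAt (fun τ => ∑ k, p k * x τ k ^ 2) (2 * ∑ k, p k * x t k * v k) t := by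
  rw [mul_sum]
  exact HasDerivAt.fun_sum fun k _ => (((hx k).pow 2).const_mul (p k)).congr_deriv (by ring)

theorem exists_pos_mul_norm_sq_le {E : Type*} [NormedAddCommGroup E] [NormedSpace ℝ E]
    [FiniteDimensional ℝ E] {Q : E → ℝ} (hQc : Continuous Q)
    (hQsmul : ∀ (r : ℝ) x, Q (r • x) = r ^ 2 * Q x) (hQpos : ∀ x, x ≠ 0 → 0 < Q x) :
    ∃ c, 0 < c ∧ ∀ x, c * ‖x‖ ^ 2 ≤ Q x := by
  obtain ⟨c, hc, hmin⟩ := (isCompact_sphere (0 : E) 1).exists_forall_le' hQc.continuousOn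
    fun y hy => hQpos y (Metric.ne_of_mem_sphere hy one_ne_zero)
  refine ⟨c, hc, fun x => ?_⟩
  rcases eq_or_ne x 0 with rfl | hx
  · simp [show Q 0 = 0 by simpa using hQsmul 0 0]
  have hn : 0 < ‖x‖ := norm_pos_iff.2 hx
  have hy := hmin (‖x‖⁻¹ • x) (by simp [norm_smul, hn.ne'])
  rw [hQsmul] at hy
  calc c * ‖x‖ ^ 2 ≤ ‖x‖⁻¹ ^ 2 * Q x * ‖x‖ ^ 2 := by gcongr
    _ = Q x := by field_simp

/-- `v` is a left null vector of the Laplacian `diagonal (fun k => ∑ m, A k m) - A`. -/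
def IsLapLeftNull {ι R : Type*} [Fintype ι] [Semiring R] (A : Matrix ι ι R) (v : ι → R) : Prop :=
  ∀ l, ∑ k, v k * A k l = v l * ∑ m, A l m

theorem exists_ne_zero_isLapLeftNull {ι K : Type*} [Fintype ι] [DecidableEq ι] [Nonempty ι]
    [Field K] (A : Matrix ι ι K) : ∃ v : ι → K, v ≠ 0 ∧ IsLapLeftNull A v := by
  have hdet : (Matrix.diagonal (fun k => ∑ m, A k m) - A).det = 0 := by
    rw [← Matrix.exists_mulVec_eq_zero_iff]
    refine ⟨fun _ => 1, fun h => one_ne_zero (congrFun h (Classical.arbitrary ι)), ?_⟩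
    ext k
    rw [Matrix.sub_mulVec, Pi.sub_apply, Matrix.mulVec_diagonal]
    simp [Matrix.mulVec, dotProduct]
  obtain ⟨v, hv0, hv⟩ := Matrix.exists_vecMul_eq_zero_iff.2 hdet
  refine ⟨v, hv0, fun l => ?_⟩
  have := congrFun hv l
  rw [Matrix.vecMul_sub, Pi.sub_apply, Matrix.vecMul_diagonal, Pi.zero_apply, sub_eq_zero] at this
  exact this.symm

theorem IsLapLeftNull.abs {ι : Type*} [Fintype ι] {A : Matrix ι ι ℝ} (hA : ∀ k l, 0 ≤ A k l)
    {v : ι → ℝ} (hv : IsLapLeftNull A v) : IsLapLeftNull A fun k => |v k| := by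
  have hle : ∀ l ∈ (univ : Finset ι), |v l| * ∑ m, A l m ≤ ∑ k, |v k| * A k l := fun l _ =>
    calc |v l| * ∑ m, A l m = |∑ k, v k * A k l| := by
          rw [hv l, abs_mul, abs_of_nonneg (sum_nonneg fun m _ => hA l m)]
      _ ≤ ∑ k, |v k * A k l| := abs_sum_le_sum_abs _ _
      _ = ∑ k, |v k| * A k l := by simp only [abs_mul, abs_of_nonneg (hA _ l)]
  have htotal : ∑ l, |v l| * ∑ m, A l m = ∑ l, ∑ k, |v k| * A k l := by
    rw [sum_comm]
    exact sum_congr rfl fun k _ => mul_sum _ _ _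
  exact fun l => ((sum_eq_sum_iff_of_le hle).1 htotal l (mem_univ l)).symm

theorem IsLapLeftNull.eq_zero_of_eq_zero {ι : Type*} [Fintype ι] {A : Matrix ι ι ℝ}
    (hA : ∀ k l, 0 ≤ A k l) {v : ι → ℝ} (hv0 : ∀ k, 0 ≤ v k) (hv : IsLapLeftNull A v) {k l : ι}
    (hkl : A k l ≠ 0) (hl : v l = 0) : v k = 0 := by
  have hsum := hv l
  rw [hl, zero_mul] at hsum
  have := (sum_eq_zero_iff_of_nonneg fun j _ => mul_nonneg (hv0 j) (hA j l)).1 hsum k (mem_univ k)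
  exact (mul_eq_zero.1 this).resolve_right hkl

theorem StronglyConnected.exists_pos_isLapLeftNull {N : ℕ} [Nonempty (Fin N)]
    {W : Matrix (Fin N) (Fin N) ℝ} (hSC : StronglyConnected W) :
    ∃ p : Fin N → ℝ, (∀ k, 0 < p k) ∧ IsLapLeftNull (fun k l => |W k l|) p := by
  have hA : ∀ k l, 0 ≤ |W k l| := fun k l => abs_nonneg _
  obtain ⟨v, hv0, hv⟩ := exists_ne_zero_isLapLeftNull fun k l => |W k l|
  have hzero : ∀ i j, Reaches W i j → v i = 0 → v j = 0 := by
    intro i j hij hi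
    induction hij with
    | refl => exact hi
    | tail _ hedge ih =>
      exact abs_eq_zero.1 <| (hv.abs hA).eq_zero_of_eq_zero hA (fun k => abs_nonneg (v k))
        (abs_ne_zero.2 hedge) (abs_eq_zero.2 ih)
  have hne : ∀ k, v k ≠ 0 := fun k hk => hv0 (funext fun j => hzero k j (hSC k j) hk)
  exact ⟨fun k => |v k|, fun k => abs_pos.2 (hne k), hv.abs hA⟩

theorem sLap_mulVec_apply {N : ℕ} (W : Matrix (Fin N) (Fin N) ℝ) (x : Fin N → ℝ) (k : Fin N) :
    (sLap W *ᵥ x) k = (∑ l, |W k l|) * x k - ∑ l, W k l * x l := by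
  rw [sLap, Matrix.sub_mulVec, Pi.sub_apply, Matrix.mulVec_diagonal]
  rfl

theorem sLap_form_eq {N : ℕ} {W : Matrix (Fin N) (Fin N) ℝ} {p : Fin N → ℝ}
    (hnull : IsLapLeftNull (fun k l => |W k l|) p) (x : Fin N → ℝ) :
    ∑ k, p k * x k * (sLap W *ᵥ x) k =
      (∑ k, ∑ l, p k * (|W k l| * (x k ^ 2 + x l ^ 2) - 2 * W k l * x k * x l)) / 2 := by
  have hcol : ∑ k, ∑ l, p k * |W k l| * x l ^ 2 = ∑ k, p k * (∑ l, |W k l|) * x k ^ 2 := by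
    rw [sum_comm]
    refine sum_congr rfl fun l _ => ?_
    rw [← sum_mul, hnull l]
  have hrow : ∑ k, ∑ l, p k * |W k l| * x k ^ 2 = ∑ k, p k * (∑ l, |W k l|) * x k ^ 2 := by
    refine sum_congr rfl fun k _ => ?_
    rw [← sum_mul, ← mul_sum]
  have hcross : ∑ k, p k * x k * ∑ l, W k l * x l = ∑ k, ∑ l, p k * W k l * x k * x l := by
    refine sum_congr rfl fun k _ => ?_
    rw [mul_sum]
    exact sum_congr rfl fun l _ => by ring
  calc ∑ k, p k * x k * (sLap W *ᵥ x) k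
      = ∑ k, p k * (∑ l, |W k l|) * x k ^ 2 - ∑ k, p k * x k * ∑ l, W k l * x l := by
        rw [← sum_sub_distrib]
        exact sum_congr rfl fun k _ => by rw [sLap_mulVec_apply]; ring
    _ = (∑ k, ∑ l, p k * |W k l| * x k ^ 2 + ∑ k, ∑ l, p k * |W k l| * x l ^ 2
          - 2 * ∑ k, ∑ l, p k * W k l * x k * x l) / 2 := by
        rw [hrow, hcol, hcross]; ring
    _ = _ := by
        simp only [mul_sum, ← sum_add_distrib, ← sum_sub_distrib]
        congr 1
        exact sum_congr rfl fun k _ => sum_congr rfl fun l _ => by ring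

theorem abs_mul_sub_abs_sq_le (w a b : ℝ) :
    |w| * (|a| - |b|) ^ 2 ≤ |w| * (a ^ 2 + b ^ 2) - 2 * w * a * b := by
  have hwab : w * a * b ≤ |w| * |a| * |b| := by
    simpa only [abs_mul] using le_abs_self (w * a * b)
  have hsq : (|a| - |b|) ^ 2 = a ^ 2 + b ^ 2 - 2 * (|a| * |b|) := by
    rw [sub_sq, sq_abs, sq_abs]; ring
  rw [hsq]
  linarith

theorem abs_eq_abs_of_abs_mul_sq_add_sq_eq {w a b : ℝ} (hw : w ≠ 0)
    (h : |w| * (a ^ 2 + b ^ 2) = 2 * w * a * b) : |a| = |b| := by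
  have hle : |w| * (|a| - |b|) ^ 2 ≤ 0 := by linarith [abs_mul_sub_abs_sq_le w a b]
  have := nonpos_of_mul_nonpos_right hle (abs_pos.2 hw)
  nlinarith [sq_nonneg (|a| - |b|)]

theorem sLap_form_pos {N : ℕ} {W : Matrix (Fin N) (Fin N) ℝ} (hSC : StronglyConnected W)
    (hunb : ¬ ∃ g : Fin N → ℝ, IsGauge W Set.univ g) {p : Fin N → ℝ} (hp : ∀ k, 0 < p k)
    (hnull : IsLapLeftNull (fun k l => |W k l|) p) {x : Fin N → ℝ} (hx : x ≠ 0) :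
    0 < ∑ k, p k * x k * (sLap W *ᵥ x) k := by
  have hterm : ∀ k l, 0 ≤ p k * (|W k l| * (x k ^ 2 + x l ^ 2) - 2 * W k l * x k * x l) :=
    fun k l => mul_nonneg (hp k).le <| (mul_nonneg (abs_nonneg _) (sq_nonneg _)).trans
      (abs_mul_sub_abs_sq_le (W k l) (x k) (x l))
  rw [sLap_form_eq hnull]
  refine half_pos <| (sum_nonneg fun k _ => sum_nonneg fun l _ => hterm k l).lt_of_ne
    fun h0 => hunb ?_
  -- a null vector of the form is, after normalisation, a gauge
  have heq : ∀ k l, |W k l| * (x k ^ 2 + x l ^ 2) = 2 * W k l * x k * x l := by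
    intro k l
    have hk := (sum_eq_zero_iff_of_nonneg fun k _ => sum_nonneg fun l _ => hterm k l).1
      h0.symm k (mem_univ k)
    have hkl := (sum_eq_zero_iff_of_nonneg fun l _ => hterm k l).1 hk l (mem_univ l)
    linarith [(mul_eq_zero.1 hkl).resolve_left (hp k).ne']
  obtain ⟨k₀, hk₀⟩ := Function.ne_iff.1 hx
  have hreach : ∀ i j, Reaches W i j → |x j| = |x i| := by
    intro i j hij
    induction hij with
    | refl => rfl
    | tail _ hedge ih => rw [← ih]; exact abs_eq_abs_of_abs_mul_sq_add_sq_eq hedge (heq _ _)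
  set c := |x k₀|
  have hc : 0 < c := abs_pos.2 hk₀
  have hsq : ∀ k, x k ^ 2 = c ^ 2 := fun k => by rw [← sq_abs, hreach k₀ k (hSC k₀ k)]
  refine ⟨fun k => x k / c, fun k _ => ?_, fun k _ l _ => ?_⟩
  · have : |x k / c| = 1 := by
      rw [abs_div, abs_of_pos hc, div_eq_one_iff_eq hc.ne', hreach k₀ k (hSC k₀ k)]
    exact (abs_eq zero_le_one).1 this
  · have hW : 2 * W k l * x k * x l = 2 * (|W k l| * c ^ 2) := by
      rw [← heq, hsq, hsq]; ring
    field_simp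
    linarith

theorem exists_pos_mul_weighted_sq_le_sLap_form {N : ℕ} [Nonempty (Fin N)]
    {W : Matrix (Fin N) (Fin N) ℝ} (hSC : StronglyConnected W)
    (hunb : ¬ ∃ g : Fin N → ℝ, IsGauge W Set.univ g) {p : Fin N → ℝ} (hp : ∀ k, 0 < p k)
    (hnull : IsLapLeftNull (fun k l => |W k l|) p) :
    ∃ c, 0 < c ∧ ∀ x : Fin N → ℝ, c * ∑ k, p k * x k ^ 2 ≤ ∑ k, p k * x k * (sLap W *ᵥ x) k := by
  obtain ⟨c, hc, hcQ⟩ := exists_pos_mul_norm_sq_le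
    (Q := fun x : Fin N → ℝ => ∑ k, p k * x k * (sLap W *ᵥ x) k) (by fun_prop)
    (fun r x => by
      simp only [Matrix.mulVec_smul, Pi.smul_apply, smul_eq_mul, mul_sum]
      exact sum_congr rfl fun k _ => by ring)
    fun x hx => sLap_form_pos hSC hunb hp hnull hx
  have hP : 0 < ∑ k, p k := sum_pos (fun k _ => hp k) univ_nonempty
  refine ⟨c / ∑ k, p k, div_pos hc hP, fun x => ?_⟩
  have hV : ∑ k, p k * x k ^ 2 ≤ (∑ k, p k) * ‖x‖ ^ 2 := by
    rw [sum_mul]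
    refine sum_le_sum fun k _ => mul_le_mul_of_nonneg_left ?_ (hp k).le
    simpa [sq_abs] using pow_le_pow_left₀ (norm_nonneg _) (norm_le_pi_norm x k) 2
  calc c / (∑ k, p k) * ∑ k, p k * x k ^ 2 ≤ c / (∑ k, p k) * ((∑ k, p k) * ‖x‖ ^ 2) := by
        gcongr
    _ = c * ‖x‖ ^ 2 := by field_simp
    _ ≤ _ := hcQ x

namespace SMCTraj

variable {N : ℕ} {W : Matrix (Fin N) (Fin N) ℝ} {κ ρ1 ρ2 Tr Ts μ1 μ2 μ3 : ℝ}
  {d x ς s : ℝ → Fin N → ℝ}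

theorem hasDerivAt_aux_apply (h : SMCTraj W κ ρ1 ρ2 Tr Ts μ1 μ2 μ3 d x ς s) {t : ℝ}
    (ht : 0 ≤ t) (htr : t ≠ Tr) (htT : t ≠ Tr + Ts) (k : Fin N) :
    HasDerivAt (fun τ => ς τ k) ((ρ1 + ρ2 * gain κ (Tr + Ts) t) * (sLap W *ᵥ x t) k) t :=
  hasDerivAt_pi.1 (h.2.2.2 t ht htr htT).1 k

theorem hasDerivAt_sliding (h : SMCTraj W κ ρ1 ρ2 Tr Ts μ1 μ2 μ3 d x ς s) {t : ℝ}
    (ht : 0 ≤ t) (htr : t ≠ Tr) (htT : t ≠ Tr + Ts) (k : Fin N) :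
    HasDerivAt (fun τ => x τ k + ς τ k)
      (-(μ1 * s t k) - (μ2 + μ3 * gain κ Tr t) * (x t k + ς t k) + d t k) t :=
  ((h.2.2.2 t ht htr htT).2 k).add (h.hasDerivAt_aux_apply ht htr htT k) |>.congr_deriv
    (by ring)

theorem sliding_eq_zero (h : SMCTraj W κ ρ1 ρ2 Tr Ts μ1 μ2 μ3 d x ς s) {δ : ℝ} (hκ : 0 < κ)
    (hTr : 0 < Tr) (hTs : 0 < Ts) (hμ2 : 0 ≤ μ2) (hμ3 : 0 < μ3) (hμ1 : δ < μ1)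
    (hd : ∀ t : ℝ, 0 ≤ t → ∀ k, |d t k| ≤ δ) (t : ℝ) (ht : Tr ≤ t) (k : Fin N) :
    x t k + ς t k = 0 := by
  have hcont : Continuous fun τ => x τ k + ς τ k :=
    ((continuous_apply k).comp h.1).add ((continuous_apply k).comp h.2.1)
  refine pow_eq_zero_iff two_ne_zero |>.1 <| eq_zero_of_hasDerivAt_le_neg_gain_mul
    (f := fun τ => (x τ k + ς τ k) ^ 2) (c := 2 * μ3) (e := Tr + Ts) hκ (by positivity) le_rfl
    hTr (by linarith) (fun τ => sq_nonneg _) (hcont.pow 2)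
    (fun τ hτ hτr hτT => (h.hasDerivAt_sliding hτ.le hτr hτT k).pow 2) ?_ t ht
  intro τ hτ hτr hτT
  set σ := x τ k + ς τ k
  have hsel : μ1 * (s τ k * σ) = μ1 * |σ| := by rw [(h.2.2.1 τ k).2]
  have hdist : d τ k * σ ≤ μ1 * |σ| := by
    calc d τ k * σ ≤ |d τ k| * |σ| := by rw [← abs_mul]; exact le_abs_self _
      _ ≤ μ1 * |σ| := by gcongr; linarith [hd τ hτ.le k]
  rw [Nat.cast_ofNat, Nat.add_one_sub_one, pow_one]
  nlinarith [mul_nonneg hμ2 (sq_nonneg σ)]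

theorem hasDerivAt_of_sliding_eq_zero (h : SMCTraj W κ ρ1 ρ2 Tr Ts μ1 μ2 μ3 d x ς s)
    (hTr : 0 < Tr) (hσ : ∀ t, Tr ≤ t → ∀ k, x t k + ς t k = 0) {t : ℝ} (ht : Tr < t)
    (htT : t ≠ Tr + Ts) (k : Fin N) :
    HasDerivAt (fun τ => x τ k) (-((ρ1 + ρ2 * gain κ (Tr + Ts) t) * (sLap W *ᵥ x t) k)) t :=
  (h.hasDerivAt_aux_apply (hTr.le.trans ht.le) ht.ne' htT k).neg.congr_of_eventuallyEq <|
    (eventually_gt_nhds ht).mono fun τ hτ => eq_neg_of_add_eq_zero_left (hσ τ hτ.le k)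

theorem eq_zero_of_sliding_eq_zero (h : SMCTraj W κ ρ1 ρ2 Tr Ts μ1 μ2 μ3 d x ς s) (hκ : 0 < κ)
    (hρ1 : 0 ≤ ρ1) (hρ2 : 0 < ρ2) (hTr : 0 < Tr) (hTs : 0 < Ts)
    (hσ : ∀ t, Tr ≤ t → ∀ k, x t k + ς t k = 0) {p : Fin N → ℝ} (hp : ∀ k, 0 < p k) {c : ℝ}
    (hc : 0 < c) (hcQ : ∀ y : Fin N → ℝ, c * ∑ k, p k * y k ^ 2 ≤ ∑ k, p k * y k * (sLap W *ᵥ y) k)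
    (t : ℝ) (ht : Tr + Ts ≤ t) (k : Fin N) : x t k = 0 := by
  have hV0 : ∀ τ, 0 ≤ ∑ k, p k * x τ k ^ 2 := fun τ =>
    sum_nonneg fun k _ => mul_nonneg (hp k).le (sq_nonneg _)
  have hxc := h.1
  have hVt := eq_zero_of_hasDerivAt_le_neg_gain_mul (f := fun τ => ∑ k, p k * x τ k ^ 2)
    (c := 2 * ρ2 * c) (e := Tr + Ts) hκ (by positivity) hTr.le (by linarith) le_rfl hV0
    (by fun_prop) (fun τ hτ _ hτT => hasDerivAt_sum_mul_sq p fun k =>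
      h.hasDerivAt_of_sliding_eq_zero hTr hσ hτ hτT k) (fun τ hτ _ _ => ?_) t ht
  · have hterm := (sum_eq_zero_iff_of_nonneg fun k _ => mul_nonneg (hp k).le (sq_nonneg _)).1
      hVt k (mem_univ k)
    exact pow_eq_zero_iff two_ne_zero |>.1 <| (mul_eq_zero.1 hterm).resolve_left (hp k).ne'
  · set g := gain κ (Tr + Ts) τ
    have hg : 0 ≤ g := gain_nonneg hκ.le _ _
    have hQ := hcQ (x τ)
    have hpull : ∑ k, p k * x τ k * -((ρ1 + ρ2 * g) * (sLap W *ᵥ x τ) k) =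
        -((ρ1 + ρ2 * g) * ∑ k, p k * x τ k * (sLap W *ᵥ x τ) k) := by
      rw [mul_sum, ← sum_neg_distrib]
      exact sum_congr rfl fun k _ => by ring
    rw [hpull]
    nlinarith [mul_nonneg hρ1 (hV0 τ), mul_nonneg hg (hV0 τ),
      mul_le_mul_of_nonneg_left hQ (add_nonneg hρ1 (mul_nonneg hρ2.le hg))]

end SMCTraj

theorem smc_prescribed_time_stability_strong_unbalanced_general
    {N : ℕ} (W : Matrix (Fin N) (Fin N) ℝ)
    (hSC : StronglyConnected W)
    (hunb : ¬ ∃ g : Fin N → ℝ, IsGauge W Set.univ g)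
    (κ ρ1 ρ2 Tr Ts μ1 μ2 μ3 δ : ℝ) (hκ : 2 < κ)
    (hρ1 : 0 < ρ1) (hρ2 : 0 < ρ2) (hTr : 0 < Tr) (hTs : 0 < Ts)
    (hμ2 : 0 < μ2) (hμ3 : 0 < μ3) (hμ1 : δ < μ1)
    (d : ℝ → Fin N → ℝ) (hd : ∀ t : ℝ, 0 ≤ t → ∀ k, |d t k| ≤ δ)
    (x ς s : ℝ → Fin N → ℝ)
    (htraj : SMCTraj W κ ρ1 ρ2 Tr Ts μ1 μ2 μ3 d x ς s) :
    ∀ t : ℝ, Tr + Ts ≤ t → ∀ k, x t k = 0 := by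
  intro t ht k
  have : Nonempty (Fin N) := ⟨k⟩
  have hκ0 : 0 < κ := by linarith
  obtain ⟨p, hp, hnull⟩ := hSC.exists_pos_isLapLeftNull
  obtain ⟨c, hc, hcQ⟩ := exists_pos_mul_weighted_sq_le_sLap_form hSC hunb hp hnull
  have hσ := htraj.sliding_eq_zero hκ0 hTr hTs hμ2.le hμ3 hμ1 hd
  exact htraj.eq_zero_of_sliding_eq_zero hκ0 hρ1.le hρ2 hTr hTs hσ hp hc hcQ t ht k

theorem smc_prescribed_time_stability_strong_unbalanced
    {N : ℕ} (hN : 2 ≤ N) (W : Matrix (Fin N) (Fin N) ℝ)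
    (hdiag : ∀ k, W k k = 0)
    (hSC : StronglyConnected W)
    (hunb : ¬ ∃ g : Fin N → ℝ, IsGauge W Set.univ g)
    (κ ρ1 ρ2 Tr Ts μ1 μ2 μ3 δ : ℝ) (hκ : 2 < κ)
    (hρ1 : 0 < ρ1) (hρ2 : 0 < ρ2) (hTr : 0 < Tr) (hTs : 0 < Ts)
    (hμ2 : 0 < μ2) (hμ3 : 0 < μ3) (hδ : 0 ≤ δ) (hμ1 : δ < μ1)
    (d : ℝ → Fin N → ℝ) (hd : ∀ t : ℝ, 0 ≤ t → ∀ k, |d t k| ≤ δ)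
    (x ς s : ℝ → Fin N → ℝ)
    (htraj : SMCTraj W κ ρ1 ρ2 Tr Ts μ1 μ2 μ3 d x ς s) :
    ∀ t : ℝ, Tr + Ts ≤ t → ∀ k, x t k = 0 :=
  smc_prescribed_time_stability_strong_unbalanced_general W hSC hunb κ ρ1 ρ2 Tr Ts μ1 μ2 μ3 δ hκ hρ1
    hρ2 hTr hTs hμ2 hμ3 hμ1 d hd x ς s htraj
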